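/- Let k ≥ 2 and let ω : Fin k → ℝ be a weight vector with ω₂ = 2ω₁. Let β : Fin k → ℕ be an exponent vector with β₂ ≥ 1 and let β' = β + 2e₁ − e₂ (so β' and β are adjacent elements of a string). Then (β₁+2)(β₁+1)·A_ω(β') = β₂·(Σ_{i=1}^k β_i)·A_ω(β). (This is the coefficient cancellation of Lemma 3.3 in the case m = 1.) -/

import Mathlib

/-!
Write `β = γ + e₂`. Raising a coordinate `γ_a` by one multiplies the multinomial coefficient by
`(|γ| + 1) / (γ_a + 1)`, so `(β₁+2)(β₁+1)·multinomial β'` and `β₂(|β|+1)·multinomial β`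
both equal `(|γ|+2)(|γ|+1)·multinomial γ`. Since `ω₂ = 2ω₁`, the move `β ↦ β'` preserves the
weighted sum `Σ β_i ω_i`, while it raises `|β|` by one, which absorbs the factor `|β| + 1`.
-/

/-- The weight coefficient `A_ω(α)` of Theorem 2.1 (for `α ≠ 0`). -/
noncomputable def Aw {k : ℕ} (ω : Fin k → ℝ) (α : Fin k → ℕ) : ℝ :=
  (Nat.multinomial Finset.univ α : ℝ) * (∑ i, (α i : ℝ) * ω i) / (∑ i, (α i : ℝ))

open Function Finset Nat

theorem Finset.prod_factorial_update_succ {α : Type*} [DecidableEq α] {s : Finset α} {a : α}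
    (ha : a ∈ s) (f : α → ℕ) :
    ∏ i ∈ s, (update f a (f a + 1) i)! = (f a + 1) * ∏ i ∈ s, (f i)! := by
  rw [← mul_prod_erase s _ ha, ← mul_prod_erase s (fun i => (f i)!) ha,
    update_self, Nat.factorial_succ, mul_assoc]
  congr 2
  exact prod_congr rfl fun i hi => by rw [update_of_ne (ne_of_mem_erase hi)]

theorem Finset.sum_update_add {α : Type*} [DecidableEq α] {s : Finset α} {a : α}
    (ha : a ∈ s) (f : α → ℕ) (n : ℕ) :
    ∑ i ∈ s, update f a (f a + n) i = ∑ i ∈ s, f i + n := by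
  rw [sum_update_of_mem ha, ← add_sum_erase s f ha, sdiff_singleton_eq_erase]
  ring

theorem Nat.succ_mul_multinomial_update_succ {α : Type*} [DecidableEq α] {s : Finset α} {a : α}
    (ha : a ∈ s) (f : α → ℕ) :
    (f a + 1) * multinomial s (update f a (f a + 1)) = (∑ i ∈ s, f i + 1) * multinomial s f := by
  refine Nat.eq_of_mul_eq_mul_left (prod_pos (s := s) fun i _ => (f i).factorial_pos) ?_
  calc (∏ i ∈ s, (f i)!) * ((f a + 1) * multinomial s (update f a (f a + 1)))
      = (∑ i ∈ s, f i + 1)! := by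
        rw [← mul_assoc, mul_comm _ (f a + 1), ← prod_factorial_update_succ ha, multinomial_spec,
          sum_update_add ha]
    _ = (∏ i ∈ s, (f i)!) * ((∑ i ∈ s, f i + 1) * multinomial s f) := by
        rw [factorial_succ, ← multinomial_spec]; ring

theorem Finset.sum_update_add_mul {α R : Type*} [DecidableEq α] [CommSemiring R] {s : Finset α}
    {a : α} (ha : a ∈ s) (f : α → ℕ) (w : α → R) (n : ℕ) :
    ∑ i ∈ s, (update f a (f a + n) i : R) * w i = ∑ i ∈ s, (f i : R) * w i + n * w a := by
  rw [← add_sum_erase s _ ha, ← add_sum_erase s (fun i => (f i : R) * w i) ha, update_self,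
    sum_congr rfl fun i hi => by rw [update_of_ne (ne_of_mem_erase hi)]]
  push_cast; ring

theorem Nat.mul_multinomial_update_add_two {α : Type*} [DecidableEq α] {s : Finset α} {a b : α}
    (ha : a ∈ s) (hb : b ∈ s) (f : α → ℕ) :
    (f a + 2) * (f a + 1) * multinomial s (update f a (f a + 2)) =
      (f b + 1) * (∑ i ∈ s, f i + 2) * multinomial s (update f b (f b + 1)) := by
  have step_a := succ_mul_multinomial_update_succ ha f
  have step_aa := succ_mul_multinomial_update_succ ha (update f a (f a + 1))
  have step_b := succ_mul_multinomial_update_succ hb f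
  simp only [update_self, update_idem, sum_update_add ha] at step_aa
  linear_combination (f a + 1) * step_aa + (∑ i ∈ s, f i + 2) * step_a - (∑ i ∈ s, f i + 2) * step_b

theorem mul_Aw_update_add_two {k : ℕ} {ω : Fin k → ℝ} {i j : Fin k} (hω : ω j = 2 * ω i)
    (γ : Fin k → ℕ) :
    ((γ i : ℝ) + 2) * (γ i + 1) * Aw ω (update γ i (γ i + 2)) =
      (γ j + 1) * (∑ l, (γ l : ℝ) + 1) * Aw ω (update γ j (γ j + 1)) := by
  have hM := congrArg (Nat.cast : ℕ → ℝ)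
    (Nat.mul_multinomial_update_add_two (mem_univ i) (mem_univ j) γ)
  have hS (a : Fin k) (n : ℕ) : ∑ l, (update γ a (γ a + n) l : ℝ) = ∑ l, (γ l : ℝ) + n := by
    simpa using sum_update_add_mul (mem_univ a) γ (fun _ => (1 : ℝ)) n
  have hS_nonneg : 0 ≤ ∑ l, (γ l : ℝ) := by positivity
  push_cast at hM
  rw [Aw, Aw, sum_update_add_mul (mem_univ i), sum_update_add_mul (mem_univ j), hS, hS, hω]
  field_simp
  linear_combination (∑ l, (γ l : ℝ) * ω l + 2 * ω i) * (∑ l, (γ l : ℝ) + 1) * hM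

theorem mul_Aw_update_update_sub_one {k : ℕ} {ω : Fin k → ℝ} {i j : Fin k} (hij : i ≠ j)
    (hω : ω j = 2 * ω i) (β : Fin k → ℕ) (hβ : 1 ≤ β j) :
    ((β i : ℝ) + 2) * (β i + 1) * Aw ω (update (update β i (β i + 2)) j (β j - 1)) =
      β j * (∑ l, (β l : ℝ)) * Aw ω β := by
  obtain ⟨γ, rfl⟩ : ∃ γ : Fin k → ℕ, β = update γ j (γ j + 1) :=
    ⟨update β j (β j - 1), by simp; omega⟩
  have hS : ∑ l, (update γ j (γ j + 1) l : ℝ) = ∑ l, (γ l : ℝ) + 1 := by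
    simpa using sum_update_add_mul (mem_univ j) γ (fun _ => (1 : ℝ)) 1
  simp only [update_self, update_of_ne hij, add_tsub_cancel_right, update_comm hij, update_idem,
    update_eq_self, hS]
  push_cast
  exact mul_Aw_update_add_two hω γ

/-- Coefficient cancellation of Lemma 3.3 in the case `m = 1`: if `ω₂ = 2ω₁` and
`β' = β + 2e₁ − e₂` then `(β₁+2)(β₁+1)·A_ω(β') = β₂·(Σ β_i)·A_ω(β)`. -/
theorem string_cancellation_m_one (k : ℕ) (hk : 2 ≤ k) (ω : Fin k → ℝ)
    (hω : ω (⟨1, by omega⟩ : Fin k) = 2 * ω (⟨0, by omega⟩ : Fin k))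
    (β : Fin k → ℕ) (hβ : 1 ≤ β (⟨1, by omega⟩ : Fin k)) :
    ((β (⟨0, by omega⟩ : Fin k) : ℝ) + 2) * ((β (⟨0, by omega⟩ : Fin k) : ℝ) + 1) *
        Aw ω (Function.update
          (Function.update β (⟨0, by omega⟩ : Fin k) (β (⟨0, by omega⟩ : Fin k) + 2))
          (⟨1, by omega⟩ : Fin k) (β (⟨1, by omega⟩ : Fin k) - 1)) =
      (β (⟨1, by omega⟩ : Fin k) : ℝ) * (∑ i, (β i : ℝ)) * Aw ω β :=
  mul_Aw_update_update_sub_one (by simp [Fin.ext_iff]) hω β hβ
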